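/- Let r ≥ 2 and let u_{iν}, v_{iν} (i ∈ {1,2}, 1 ≤ ν ≤ r) be 4r independent indeterminates over ℚ, and set R_r = Σ_{1 ≤ i < j ≤ r} (u_{1i}u_{2j} − u_{1j}u_{2i})(v_{1i}v_{2j} − v_{1j}v_{2i}). Then for every integer l ≥ 1 and every choice of pairs (p_1,q_1), …, (p_l,q_l) with 1 ≤ p_t < q_t ≤ r for each t, applying the composite differential operator ∏_{t=1}^{l} ( ∂²/∂u_{1p_t}∂u_{2q_t} − ∂²/∂u_{1q_t}∂u_{2p_t} ) to R_r^l yields l!·(l+1)!·∏_{t=1}^{l} (v_{1p_t}v_{2q_t} − v_{1q_t}v_{2p_t}). -/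

import Mathlib

open MvPolynomial

/-- Variable index type for the entries of two `2 × r` matrices `U` (left summand)
and `V` (right summand) of indeterminates. -/
abbrev UVvar (r : ℕ) : Type := (Fin 2 × Fin r) ⊕ (Fin 2 × Fin r)

/-- The entry `u_{iν}` of `U`. -/
noncomputable def uVar (r : ℕ) (i : Fin 2) (ν : Fin r) : MvPolynomial (UVvar r) ℚ :=
  X (Sum.inl (i, ν))

/-- The entry `v_{iν}` of `V`. -/
noncomputable def vVar (r : ℕ) (i : Fin 2) (ν : Fin r) : MvPolynomial (UVvar r) ℚ :=
  X (Sum.inr (i, ν))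

/-- `R_r = Σ_{i<j} (u_{1i}u_{2j} − u_{1j}u_{2i})(v_{1i}v_{2j} − v_{1j}v_{2i})`,
the pairing of the 2×2 minors of `U` with those of `V`. -/
noncomputable def Rpoly (r : ℕ) : MvPolynomial (UVvar r) ℚ :=
  ∑ i : Fin r, ∑ j ∈ Finset.Ioi i,
    (uVar r 0 i * uVar r 1 j - uVar r 0 j * uVar r 1 i) *
      (vVar r 0 i * vVar r 1 j - vVar r 0 j * vVar r 1 i)

/-!
By the Binet–Cauchy identity, `R_r = det (U Vᵀ)`. For the operator
`Ω_{ab} = ∂²/∂u_{1a}∂u_{2b} − ∂²/∂u_{1b}∂u_{2a}` one computes `Ω_{ab} R_r = 2 m_{ab}` and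
`∂_{1a}R_r ∂_{2b}R_r − ∂_{1b}R_r ∂_{2a}R_r = m_{ab} R_r`, where `m_{ab}` is the `(a, b)` minor
of `V`; the chain rule then gives the Cayley-type identity
`Ω_{ab} (R_r^{k+1}) = (k+1)(k+2) m_{ab} R_r^k`. Since the `Ω`'s commute with multiplication by
polynomials in `V` alone, applying `l` of them to `R_r^l` produces
`∏_{k<l} (k+1)(k+2) = l! (l+1)!` times the product of the minors.
-/

theorem Finset.binet_cauchy {ι R : Type*} [Fintype ι] [LinearOrder ι] [LocallyFiniteOrderTop ι]
    [LocallyFiniteOrderBot ι] [CommRing R] (a b c d : ι → R) :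
    ∑ i, ∑ j ∈ Ioi i, (a i * b j - a j * b i) * (c i * d j - c j * d i)
      = (∑ i, a i * c i) * (∑ i, b i * d i) - (∑ i, a i * d i) * (∑ i, b i * c i) := by
  set g : ι → ι → R := fun i j => a i * b j * (c i * d j - c j * d i)
  have h_pair : ∀ i j, (a i * b j - a j * b i) * (c i * d j - c j * d i) = g j i + g i j :=
    fun i j => by simp only [g]; ring
  have h_diag : ∀ i, g i i = 0 := fun i => by simp only [g]; ring
  calc ∑ i, ∑ j ∈ Ioi i, (a i * b j - a j * b i) * (c i * d j - c j * d i)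
      = ∑ i, ∑ j ∈ {i}ᶜ, g j i := by
        simp_rw [h_pair]; exact sum_sum_Ioi_add_eq_sum_sum_off_diag g
    _ = ∑ i, ∑ j, g j i := by
        refine sum_congr rfl fun i _ => ?_
        rw [← sum_compl_add_sum {i}, sum_singleton, h_diag, add_zero]
    _ = _ := by
        rw [sum_comm, sum_mul_sum, sum_mul_sum, ← sum_sub_distrib]
        refine sum_congr rfl fun i _ => ?_
        rw [← sum_sub_distrib]
        refine sum_congr rfl fun j _ => ?_
        simp only [g]; ring

theorem Nat.ascFactorial_succ_eq_mul (n k : ℕ) :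
    n.ascFactorial (k + 1) = n * (n + 1).ascFactorial k :=
  (Nat.succ_ascFactorial n k).symm

theorem Nat.two_ascFactorial (k : ℕ) : (2 : ℕ).ascFactorial k = (k + 1).factorial := by
  simpa [add_comm] using Nat.factorial_mul_ascFactorial 1 k

namespace Derivation

variable {R A : Type*} [CommSemiring R]

section CommSemiring

variable [CommSemiring A] [Algebra R A]

theorem apply_pow_succ (D : Derivation R A A) (f : A) (k : ℕ) :
    D (f ^ (k + 1)) = (k + 1) • (f ^ k * D f) := by
  rw [D.leibniz_pow, Nat.add_sub_cancel, smul_eq_mul]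

theorem apply_list_prod_eq_zero (D : Derivation R A A) {l : List A} (h : ∀ x ∈ l, D x = 0) :
    D l.prod = 0 :=
  List.prod_induction (fun x => D x = 0) (fun x y hx hy => by simp [hx, hy]) D.map_one_eq_zero h

end CommSemiring

section CommRing

variable [CommRing A] [Algebra R A]

theorem apply_pow_mul_sub_apply_pow_mul {D₁ D₂ D₃ D₄ : Derivation R A A} {f g : A}
    (h : D₁ f * D₂ f - D₃ f * D₄ f = g * f) (k : ℕ) :
    D₁ (f ^ k) * D₂ f - D₃ (f ^ k) * D₄ f = k • (g * f ^ k) := by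
  cases k with
  | zero => simp
  | succ k =>
    rw [D₁.apply_pow_succ, D₃.apply_pow_succ, smul_mul_assoc, smul_mul_assoc, ← smul_sub,
      mul_assoc, mul_assoc, ← mul_sub, h, pow_succ]
    ring

end CommRing

end Derivation

/-- The entry `(U Vᵀ)_{ab}`. -/
noncomputable def uvPairing (r : ℕ) (a b : Fin 2) : MvPolynomial (UVvar r) ℚ :=
  ∑ ν, uVar r a ν * vVar r b ν

noncomputable def vMinor (r : ℕ) (a b : Fin r) : MvPolynomial (UVvar r) ℚ :=
  vVar r 0 a * vVar r 1 b - vVar r 0 b * vVar r 1 a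

noncomputable def uMinorDiff (r : ℕ) (a b : Fin r) :
    Module.End ℚ (MvPolynomial (UVvar r) ℚ) :=
  (pderiv (Sum.inl (0, a))).toLinearMap ∘ₗ (pderiv (Sum.inl (1, b))).toLinearMap
    - (pderiv (Sum.inl (0, b))).toLinearMap ∘ₗ (pderiv (Sum.inl (1, a))).toLinearMap

theorem uMinorDiff_apply (r : ℕ) (a b : Fin r) (f : MvPolynomial (UVvar r) ℚ) :
    uMinorDiff r a b f = pderiv (Sum.inl (0, a)) (pderiv (Sum.inl (1, b)) f)
      - pderiv (Sum.inl (0, b)) (pderiv (Sum.inl (1, a)) f) :=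
  rfl

theorem Rpoly_eq_uvPairing (r : ℕ) :
    Rpoly r = uvPairing r 0 0 * uvPairing r 1 1 - uvPairing r 0 1 * uvPairing r 1 0 :=
  Finset.binet_cauchy _ _ _ _

theorem pderiv_inl_vVar (r : ℕ) (x : Fin 2 × Fin r) (i : Fin 2) (ν : Fin r) :
    pderiv (Sum.inl x) (vVar r i ν) = 0 := by
  simp [vVar, pderiv_X]

theorem pderiv_inl_vMinor (r : ℕ) (x : Fin 2 × Fin r) (a b : Fin r) :
    pderiv (Sum.inl x) (vMinor r a b) = 0 := by
  simp [vMinor, pderiv_inl_vVar]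

theorem pderiv_inl_uvPairing (r : ℕ) (a c d : Fin 2) (ν : Fin r) :
    pderiv (Sum.inl (a, ν)) (uvPairing r c d) = if a = c then vVar r d ν else 0 := by
  simp only [uvPairing, uVar, map_sum, pderiv_mul, pderiv_inl_vVar, pderiv_X, Pi.single_apply,
    Sum.inl.injEq, Prod.mk.injEq, mul_zero]
  split_ifs with h
  · subst h; simp
  · simp [Ne.symm h]

theorem pderiv_u0_Rpoly (r : ℕ) (a : Fin r) :
    pderiv (Sum.inl (0, a)) (Rpoly r)
      = uvPairing r 1 1 * vVar r 0 a - uvPairing r 1 0 * vVar r 1 a := by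
  simp [Rpoly_eq_uvPairing, pderiv_inl_uvPairing]

theorem pderiv_u1_Rpoly (r : ℕ) (b : Fin r) :
    pderiv (Sum.inl (1, b)) (Rpoly r)
      = uvPairing r 0 0 * vVar r 1 b - uvPairing r 0 1 * vVar r 0 b := by
  simp [Rpoly_eq_uvPairing, pderiv_inl_uvPairing]

theorem pderiv_u0_pderiv_u1_Rpoly (r : ℕ) (a b : Fin r) :
    pderiv (Sum.inl (0, a)) (pderiv (Sum.inl (1, b)) (Rpoly r)) = vMinor r a b := by
  simp only [pderiv_u1_Rpoly, map_sub, pderiv_mul, pderiv_inl_vVar, pderiv_inl_uvPairing,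
    if_true, mul_zero, add_zero, vMinor]
  ring

theorem uMinorDiff_Rpoly (r : ℕ) (a b : Fin r) :
    uMinorDiff r a b (Rpoly r) = 2 * vMinor r a b := by
  rw [uMinorDiff_apply, pderiv_u0_pderiv_u1_Rpoly, pderiv_u0_pderiv_u1_Rpoly, vMinor, vMinor]
  ring

/-- `∂R_r/∂U = cof (U Vᵀ) · V`, and the `2 × 2` cofactor matrix has determinant `R_r`. -/
theorem pderiv_u_Rpoly_minor (r : ℕ) (a b : Fin r) :
    pderiv (Sum.inl (0, a)) (Rpoly r) * pderiv (Sum.inl (1, b)) (Rpoly r)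
      - pderiv (Sum.inl (0, b)) (Rpoly r) * pderiv (Sum.inl (1, a)) (Rpoly r)
      = vMinor r a b * Rpoly r := by
  rw [pderiv_u0_Rpoly, pderiv_u0_Rpoly, pderiv_u1_Rpoly, pderiv_u1_Rpoly, Rpoly_eq_uvPairing,
    vMinor]
  ring

theorem uMinorDiff_Rpoly_pow_succ (r : ℕ) (a b : Fin r) (k : ℕ) :
    uMinorDiff r a b (Rpoly r ^ (k + 1))
      = ((k + 1) * (k + 2)) • (vMinor r a b * Rpoly r ^ k) := by
  have h_minor := Derivation.apply_pow_mul_sub_apply_pow_mul (pderiv_u_Rpoly_minor r a b) k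
  have h_diff := uMinorDiff_Rpoly r a b
  rw [uMinorDiff_apply] at h_diff ⊢
  rw [Derivation.apply_pow_succ, Derivation.apply_pow_succ, map_nsmul, map_nsmul,
    Derivation.leibniz, Derivation.leibniz]
  simp only [smul_eq_mul, nsmul_eq_mul] at h_minor ⊢
  push_cast
  linear_combination (k + 1 : MvPolynomial (UVvar r) ℚ) * h_minor + (k + 1) * Rpoly r ^ k * h_diff

theorem uMinorDiff_mul_of_pderiv_inl_eq_zero (r : ℕ) (a b : Fin r)
    {g : MvPolynomial (UVvar r) ℚ} (hg : ∀ x, pderiv (Sum.inl x) g = 0)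
    (f : MvPolynomial (UVvar r) ℚ) :
    uMinorDiff r a b (g * f) = g * uMinorDiff r a b f := by
  simp only [uMinorDiff_apply, pderiv_mul, hg, zero_mul, zero_add, mul_sub]

theorem foldr_uMinorDiff_Rpoly_pow {ι : Type*} (r : ℕ) (p q : ι → Fin r) (ts : List ι)
    (n : ℕ) :
    ts.foldr (fun t => uMinorDiff r (p t) (q t)) (Rpoly r ^ (n + ts.length))
      = ((n + 1).ascFactorial ts.length * (n + 2).ascFactorial ts.length) •
          ((ts.map fun t => vMinor r (p t) (q t)).prod * Rpoly r ^ n) := by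
  induction ts generalizing n with
  | nil => simp
  | cons t ts ih =>
    have h_const (x : Fin 2 × Fin r) :
        pderiv (Sum.inl x) (ts.map fun t => vMinor r (p t) (q t)).prod = 0 := by
      apply Derivation.apply_list_prod_eq_zero
      simp [pderiv_inl_vMinor]
    rw [List.foldr_cons, List.length_cons, ← add_assoc, add_right_comm, ih, map_nsmul,
      uMinorDiff_mul_of_pderiv_inl_eq_zero r _ _ h_const, uMinorDiff_Rpoly_pow_succ,
      Nat.ascFactorial_succ_eq_mul, Nat.ascFactorial_succ_eq_mul]
    simp only [List.map_cons, List.prod_cons, nsmul_eq_mul]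
    push_cast
    ring

theorem iterated_pderiv_Rpoly_pow_general (r : ℕ) (l : ℕ)
    (p q : Fin l → Fin r) :
    (List.finRange l).foldr
        (fun t f =>
          pderiv (Sum.inl (0, p t)) (pderiv (Sum.inl (1, q t)) f)
            - pderiv (Sum.inl (0, q t)) (pderiv (Sum.inl (1, p t)) f))
        (Rpoly r ^ l)
      = (Nat.factorial l * Nat.factorial (l + 1)) •
          ∏ t : Fin l,
            (vVar r 0 (p t) * vVar r 1 (q t) - vVar r 0 (q t) * vVar r 1 (p t)) := by
  have h := foldr_uMinorDiff_Rpoly_pow r p q (List.finRange l) 0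
  simp only [List.length_finRange, zero_add, pow_zero, mul_one, Nat.one_ascFactorial,
    Nat.two_ascFactorial] at h
  rw [Fin.prod_univ_def]
  exact h

/-- Applying the (commuting) composite operator
`∏_{t=1}^{l} (∂²/∂u_{1p_t}∂u_{2q_t} − ∂²/∂u_{1q_t}∂u_{2p_t})` to `R_r^l` yields
`l!·(l+1)!·∏_t (v_{1p_t}v_{2q_t} − v_{1q_t}v_{2p_t})`. -/
theorem iterated_pderiv_Rpoly_pow (r : ℕ) (hr : 2 ≤ r) (l : ℕ) (hl : 1 ≤ l)
    (p q : Fin l → Fin r) (hpq : ∀ t, p t < q t) :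
    (List.finRange l).foldr
        (fun t f =>
          pderiv (Sum.inl (0, p t)) (pderiv (Sum.inl (1, q t)) f)
            - pderiv (Sum.inl (0, q t)) (pderiv (Sum.inl (1, p t)) f))
        (Rpoly r ^ l)
      = (Nat.factorial l * Nat.factorial (l + 1)) •
          ∏ t : Fin l,
            (vVar r 0 (p t) * vVar r 1 (q t) - vVar r 0 (q t) * vVar r 1 (p t)) :=
  iterated_pderiv_Rpoly_pow_general r l p q
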